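/- Fix ε > 0 and η > 0, and let (p_n) be a sequence with √((2+ε)·(log n)/n) ≤ p_n < 1/2 and 2·p_n·e^{1−2p_n} ≤ 1 − (2+η)·(log n)/n for all large n. Let S_n be the number of Seymour vertices of the random digraph D(n,p_n). Then n − E(S_n) → 0 as n → ∞; that is, E(S_n) = n − o(1). -/

import Mathlib

/-! Model of the random digraph `D(n, p)` on vertex set `Fin n`:  a sample point assigns a
Boolean to every ordered pair of vertices, and the arc `u → v` (for `u ≠ v`) is present iff
the Boolean at `(u, v)` is `true`.  The probability of a sample point is the product, over
ordered pairs of distinct vertices, of `p` for each present arc and `1 − p` for each absent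
arc (the unused diagonal coordinates are forced to be `false`), so that the arcs are
independent and each is present with probability `p`. -/

/-- The sample space of the random digraph on `n` vertices. -/
abbrev DOmega (n : ℕ) := Fin n → Fin n → Bool

/-- `dadj ω u v` : the arc `u → v` is present in the digraph coded by `ω`. -/
def dadj {n : ℕ} (ω : DOmega n) (u v : Fin n) : Prop :=
  u ≠ v ∧ ω u v = true

/-- The probability weight of the sample point `ω` in the model `D(n, p)`. -/
noncomputable def dwt {n : ℕ} (p : ℝ) (ω : DOmega n) : ℝ :=
  ∏ u : Fin n, ∏ v : Fin n,
    if u = v then (if ω u v then 0 else 1) else (if ω u v then p else 1 - p)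

/-- Probability of an event in the random digraph model `D(n, p)`. -/
noncomputable def dPr {n : ℕ} (p : ℝ) (E : Set (DOmega n)) : ℝ :=
  ∑ ω : DOmega n, E.indicator (dwt p) ω

/-- Expectation of a random variable in the random digraph model `D(n, p)`. -/
noncomputable def dEx {n : ℕ} (p : ℝ) (f : DOmega n → ℝ) : ℝ :=
  ∑ ω : DOmega n, dwt p ω * f ω

/-- The first out-neighborhood of `v`: vertices at directed distance exactly 1. -/
def dN1 {n : ℕ} (ω : DOmega n) (v : Fin n) : Set (Fin n) := {w | dadj ω v w}

/-- The second out-neighborhood of `v`: vertices at directed distance exactly 2. -/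
def dN2 {n : ℕ} (ω : DOmega n) (v : Fin n) : Set (Fin n) :=
  {w | w ≠ v ∧ ¬ dadj ω v w ∧ ∃ x, dadj ω v x ∧ dadj ω x w}

/-- `v` is a Seymour vertex of the digraph coded by `ω`. -/
def dSeymour {n : ℕ} (ω : DOmega n) (v : Fin n) : Prop :=
  (dN1 ω v).ncard ≤ (dN2 ω v).ncard

/-- The number of Seymour vertices. -/
noncomputable def dS {n : ℕ} (ω : DOmega n) : ℕ := {v | dSeymour ω v}.ncard

/-- The expected number of Seymour vertices of `D(n, p)`. -/
noncomputable def dES (n : ℕ) (p : ℝ) : ℝ := dEx p (fun ω : DOmega n => (dS ω : ℝ))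

/-! n − E(S_n) is the sum over v of P(v is not a Seymour vertex). If v is not a Seymour vertex
and N₁(v) = A with |A| = k, then fewer than k of the n − 1 − k vertices outside A ∪ {v} receive
an arc from A, so some set T of n − 2k of them receives none. A union bound over A and T gives
P(v not Seymour) ≤ ∑ₖ P(Bin(n−1, p) = k) · min(1, C(n−1−k, n−2k) (1−p)^{k(n−2k)}).
Split the sum at a = ⌊(1−δ)(n−1)p⌋, with δ = ε/(4+2ε), and at k = n/2. Below a it is a Chernoff
lower tail; above n/2 it is an upper tail, at most (4p(1−p))^{(n−1)/2} ≤ (2p e^{1−2p})^{(n−1)/2};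
in between the second factor is at most n e^{−p(a+1)}. Under the hypotheses on p_n each of the
three contributions, multiplied by n, is a negative power of n. -/

open Finset Real Filter

section ProbabilityModel

variable {n : ℕ} {p : ℝ}

lemma sum_prod_prod_apply (g : Fin n → Fin n → Bool → ℝ) :
    ∑ ω : DOmega n, ∏ u, ∏ v, g u v (ω u v) = ∏ u, ∏ v, (g u v true + g u v false) := by
  simp only [← Fintype.sum_bool, Fintype.prod_sum]

lemma dwt_nonneg (hp0 : 0 ≤ p) (hp1 : p ≤ 1) (ω : DOmega n) : 0 ≤ dwt p ω := by
  unfold dwt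
  refine prod_nonneg fun u _ => prod_nonneg fun v _ => ?_
  split_ifs <;> linarith

lemma sum_dwt : ∑ ω : DOmega n, dwt p ω = 1 := by
  refine (sum_prod_prod_apply fun u v b =>
    if u = v then (if b then 0 else 1) else if b then p else 1 - p).trans ?_
  refine prod_eq_one fun u _ => prod_eq_one fun v _ => ?_
  by_cases h : u = v <;> simp [h]

lemma dPr_nonneg (hp0 : 0 ≤ p) (hp1 : p ≤ 1) (E : Set (DOmega n)) : 0 ≤ dPr p E :=
  sum_nonneg fun ω _ => Set.indicator_nonneg (fun ω _ => dwt_nonneg hp0 hp1 ω) ω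

lemma dPr_add_dPr_compl (E : Set (DOmega n)) : dPr p E + dPr p Eᶜ = 1 := by
  simp only [dPr, ← sum_add_distrib, Set.indicator_self_add_compl_apply, sum_dwt]

lemma dPr_mono (hp0 : 0 ≤ p) (hp1 : p ≤ 1) {E F : Set (DOmega n)} (h : E ⊆ F) :
    dPr p E ≤ dPr p F :=
  sum_le_sum fun ω _ => Set.indicator_le_indicator_of_subset h (fun ω => dwt_nonneg hp0 hp1 ω) ω

lemma dPr_union_le (hp0 : 0 ≤ p) (hp1 : p ≤ 1) (E F : Set (DOmega n)) :
    dPr p (E ∪ F) ≤ dPr p E + dPr p F := by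
  have h : dPr p (E ∪ F) + dPr p (E ∩ F) = dPr p E + dPr p F := by
    simp only [dPr, ← sum_add_distrib, Set.indicator_union_add_inter_apply]
  linarith [dPr_nonneg hp0 hp1 (E ∩ F)]

lemma dPr_biUnion_le (hp0 : 0 ≤ p) (hp1 : p ≤ 1) {ι : Type*} (s : Finset ι)
    (F : ι → Set (DOmega n)) : dPr p (⋃ i ∈ s, F i) ≤ ∑ i ∈ s, dPr p (F i) := by
  classical
  induction s using Finset.induction_on with
  | empty => simp [dPr]
  | insert i s hi ih =>
    rw [Finset.set_biUnion_insert, sum_insert hi]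
    exact (dPr_union_le hp0 hp1 _ _).trans (by gcongr)

lemma dwt_mul_dS (ω : DOmega n) :
    dwt p ω * dS ω = ∑ v, {ω | dSeymour ω v}.indicator (dwt p) ω := by
  classical
  have : {v | dSeymour ω v} = ↑(univ.filter (dSeymour ω)) := by ext; simp
  rw [dS, this, Set.ncard_coe_finset, card_filter]
  simp only [Set.indicator_apply, Set.mem_ofPred_eq, Nat.cast_sum, Nat.cast_ite, Nat.cast_one,
    Nat.cast_zero, mul_sum, mul_ite, mul_one, mul_zero]

lemma n_sub_dES_eq_sum_dPr :
    (n : ℝ) - dES n p = ∑ v : Fin n, dPr p {ω | ¬ dSeymour ω v} := by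
  have hES : dES n p = ∑ v : Fin n, dPr p {ω | dSeymour ω v} := by
    simp only [dES, dEx, dwt_mul_dS, dPr]
    exact sum_comm
  have hcompl (v : Fin n) : dPr p {ω | ¬ dSeymour ω v} = 1 - dPr p {ω | dSeymour ω v} :=
    eq_sub_of_add_eq' (dPr_add_dPr_compl _)
  simp [hES, hcompl]

lemma n_sub_dES_nonneg (hp0 : 0 ≤ p) (hp1 : p ≤ 1) : 0 ≤ n - dES n p := by
  rw [n_sub_dES_eq_sum_dPr]
  exact sum_nonneg fun v _ => dPr_nonneg hp0 hp1 _

def arcEvent (P Q : Finset (Fin n × Fin n)) : Set (DOmega n) :=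
  {ω | (∀ x ∈ P, dadj ω x.1 x.2) ∧ ∀ x ∈ Q, ¬ dadj ω x.1 x.2}

def arcConstraint (P Q : Finset (Fin n × Fin n)) (u w : Fin n) (b : Bool) : ℝ :=
  if (u, w) ∈ P then (if b then 1 else 0) else if (u, w) ∈ Q then (if b then 0 else 1) else 1

lemma prod_arcConstraint {P Q : Finset (Fin n × Fin n)} (hPQ : Disjoint P Q)
    (hP : ∀ x ∈ P, x.1 ≠ x.2) (hQ : ∀ x ∈ Q, x.1 ≠ x.2) (ω : DOmega n) :
    ∏ u, ∏ w, arcConstraint P Q u w (ω u w) = (arcEvent P Q).indicator 1 ω := by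
  by_cases hω : ω ∈ arcEvent P Q
  · rw [Set.indicator_of_mem hω]
    refine prod_eq_one fun u _ => prod_eq_one fun w _ => ?_
    by_cases huwP : (u, w) ∈ P
    · simp [arcConstraint, huwP, (hω.1 _ huwP).2]
    by_cases huwQ : (u, w) ∈ Q
    · have : ω u w = false := by simpa [dadj, hQ _ huwQ] using hω.2 _ huwQ
      simp [arcConstraint, huwP, huwQ, this]
    · simp [arcConstraint, huwP, huwQ]
  · rw [Set.indicator_of_notMem hω]
    simp only [arcEvent, Set.mem_ofPred_eq, not_and_or, not_forall, not_not] at hω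
    rcases hω with ⟨x, hxP, hx⟩ | ⟨x, hxQ, hx⟩
    · refine prod_eq_zero (mem_univ x.1) (prod_eq_zero (mem_univ x.2) ?_)
      have : ω x.1 x.2 = false := by simpa [dadj, hP _ hxP] using hx
      simp [arcConstraint, hxP, this]
    · have hxP : x ∉ P := disjoint_right.mp hPQ hxQ
      refine prod_eq_zero (mem_univ x.1) (prod_eq_zero (mem_univ x.2) ?_)
      simp [arcConstraint, hxP, hxQ, hx.2]

lemma sum_bool_mul_arcConstraint {P Q : Finset (Fin n × Fin n)} (hPQ : Disjoint P Q)
    (hP : ∀ x ∈ P, x.1 ≠ x.2) (hQ : ∀ x ∈ Q, x.1 ≠ x.2) (u w : Fin n) :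
    (if u = w then 0 else p) * arcConstraint P Q u w true +
        (if u = w then 1 else 1 - p) * arcConstraint P Q u w false =
      (if (u, w) ∈ P then p else 1) * (if (u, w) ∈ Q then 1 - p else 1) := by
  by_cases huw : u = w
  · subst huw
    have hP' : (u, u) ∉ P := fun h => hP _ h rfl
    have hQ' : (u, u) ∉ Q := fun h => hQ _ h rfl
    simp [arcConstraint, hP', hQ']
  by_cases huwP : (u, w) ∈ P
  · simp [arcConstraint, huw, huwP, disjoint_left.mp hPQ huwP]
  by_cases huwQ : (u, w) ∈ Q <;> simp [arcConstraint, huw, huwP, huwQ]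

lemma dPr_arcEvent {P Q : Finset (Fin n × Fin n)} (hPQ : Disjoint P Q)
    (hP : ∀ x ∈ P, x.1 ≠ x.2) (hQ : ∀ x ∈ Q, x.1 ≠ x.2) :
    dPr p (arcEvent P Q) = p ^ #P * (1 - p) ^ #Q := by
  calc _ = ∑ ω : DOmega n, ∏ u, ∏ w,
          (if u = w then (if ω u w then 0 else 1) else (if ω u w then p else 1 - p)) *
            arcConstraint P Q u w (ω u w) := by
        refine sum_congr rfl fun ω _ => ?_
        rw [Fintype.prod_congr _ _ fun u => prod_mul_distrib, prod_mul_distrib,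
          prod_arcConstraint hPQ hP hQ]
        by_cases hω : ω ∈ arcEvent P Q
        · rw [Set.indicator_of_mem hω, Set.indicator_of_mem hω, Pi.one_apply, mul_one, dwt]
        · rw [Set.indicator_of_notMem hω, Set.indicator_of_notMem hω, mul_zero]
    _ = ∏ x : Fin n × Fin n, (if x ∈ P then p else 1) * (if x ∈ Q then 1 - p else 1) := by
        rw [sum_prod_prod_apply fun u w b =>
          (if u = w then (if b then 0 else 1) else (if b then p else 1 - p)) *
            arcConstraint P Q u w b, Fintype.prod_prod_type]
        simp only [Bool.false_eq_true, if_true, if_false, sum_bool_mul_arcConstraint hPQ hP hQ]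
    _ = p ^ #P * (1 - p) ^ #Q := by
        rw [prod_mul_distrib, Fintype.prod_ite_mem, Fintype.prod_ite_mem, prod_const, prod_const]

end ProbabilityModel

def binomialWeight (N : ℕ) (p : ℝ) (k : ℕ) : ℝ := p ^ k * (1 - p) ^ (N - k) * N.choose k

section BinomialTails
variable {N : ℕ} {p : ℝ}

lemma binomialWeight_nonneg (hp0 : 0 ≤ p) (hp1 : p ≤ 1) (k : ℕ) : 0 ≤ binomialWeight N p k := by
  have : 0 ≤ 1 - p := by linarith
  unfold binomialWeight; positivity

lemma sum_binomialWeight_mul_pow (θ : ℝ) :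
    ∑ k ∈ range (N + 1), binomialWeight N p k * θ ^ k = (p * θ + (1 - p)) ^ N := by
  rw [add_pow]
  exact sum_congr rfl fun k _ => by unfold binomialWeight; ring

lemma sum_binomialWeight : ∑ k ∈ range (N + 1), binomialWeight N p k = 1 := by
  simpa using sum_binomialWeight_mul_pow (N := N) (p := p) 1

/-- Markov's inequality for `θ ^ X` with `X ∼ Bin(N, p)`. -/
lemma sum_filter_binomialWeight_le (hp0 : 0 ≤ p) (hp1 : p ≤ 1) {θ : ℝ} (hθ : 0 < θ) {a : ℕ}
    (S : ℕ → Prop) [DecidablePred S] (hS : ∀ k, S k → θ ^ a ≤ θ ^ k) :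
    ∑ k ∈ (range (N + 1)).filter S, binomialWeight N p k ≤ (p * θ + (1 - p)) ^ N / θ ^ a := by
  rw [le_div_iff₀ (pow_pos hθ a), sum_mul, ← sum_binomialWeight_mul_pow]
  calc ∑ k ∈ (range (N + 1)).filter S, binomialWeight N p k * θ ^ a
      ≤ ∑ k ∈ (range (N + 1)).filter S, binomialWeight N p k * θ ^ k :=
        sum_le_sum fun k hk => mul_le_mul_of_nonneg_left (hS k (mem_filter.mp hk).2)
          (binomialWeight_nonneg hp0 hp1 k)
    _ ≤ ∑ k ∈ range (N + 1), binomialWeight N p k * θ ^ k :=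
        sum_le_sum_of_subset_of_nonneg (filter_subset _ _) fun k _ _ =>
          mul_nonneg (binomialWeight_nonneg hp0 hp1 k) (pow_pos hθ k).le

noncomputable def chernoffRate (δ : ℝ) : ℝ := δ + (1 - δ) * log (1 - δ)

lemma chernoffRate_pos {δ : ℝ} (hδ0 : 0 < δ) (hδ1 : δ < 1) : 0 < chernoffRate δ := by
  have h1 : 0 < 1 - δ := by linarith
  have hlog : log (1 - δ)⁻¹ < (1 - δ)⁻¹ - 1 :=
    log_lt_sub_one_of_pos (inv_pos.mpr h1) (by rw [ne_eq, inv_eq_one]; linarith)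
  rw [log_inv, inv_eq_one_div, ← sub_pos] at hlog
  have := mul_pos h1 hlog
  rw [chernoffRate]
  field_simp at this
  linarith

lemma binomial_lower_tail_le (hp0 : 0 ≤ p) (hp1 : p ≤ 1) {δ : ℝ} (hδ0 : 0 < δ) (hδ1 : δ < 1)
    {a : ℕ} (ha : (a : ℝ) ≤ (1 - δ) * N * p) :
    ∑ k ∈ (range (N + 1)).filter (· ≤ a), binomialWeight N p k ≤
      exp (-(chernoffRate δ * N * p)) := by
  have h1 : 0 < 1 - δ := by linarith
  refine (sum_filter_binomialWeight_le hp0 hp1 h1 _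
    fun k hk => pow_le_pow_of_le_one h1.le (by linarith) hk).trans ?_
  have hbase : p * (1 - δ) + (1 - p) ≤ exp (-(δ * p)) := by
    linarith [one_sub_le_exp_neg (δ * p)]
  have hpow : (1 - δ) ^ a = exp (a * log (1 - δ)) := by rw [exp_nat_mul, exp_log h1]
  calc (p * (1 - δ) + (1 - p)) ^ N / (1 - δ) ^ a
      ≤ exp (-(δ * p)) ^ N / (1 - δ) ^ a := by gcongr
    _ = exp (-(δ * p) * N - a * log (1 - δ)) := by
        rw [hpow, ← exp_nat_mul, ← exp_sub]; ring_nf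
    _ ≤ exp (-(chernoffRate δ * N * p)) := by
        gcongr
        have hlog : log (1 - δ) ≤ 0 := log_nonpos h1.le (by linarith)
        rw [chernoffRate]
        nlinarith

lemma sq_binomial_upper_tail_le (hp0 : 0 < p) (hp : p ≤ 1 / 2) :
    (∑ k ∈ (range (N + 1)).filter (N < 2 * ·), binomialWeight N p k) ^ 2 ≤
      (4 * p * (1 - p)) ^ N := by
  have hq : 0 < 1 - p := by linarith
  set θ := (1 - p) / p
  have hθ : 1 ≤ θ := by rw [le_div_iff₀ hp0]; linarith
  have hθ0 : 0 < θ := by positivity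
  have hpθ : p * θ = 1 - p := mul_div_cancel₀ _ hp0.ne'
  clear_value θ
  have hS := sum_filter_binomialWeight_le (N := N) hp0.le (by linarith) hθ0
    (a := (N + 1) / 2) (N < 2 * ·) fun k hk => pow_le_pow_right₀ hθ (by omega)
  calc _ ≤ ((p * θ + (1 - p)) ^ N / θ ^ ((N + 1) / 2)) ^ 2 :=
        pow_le_pow_left₀ (sum_nonneg fun k _ => binomialWeight_nonneg hp0.le (by linarith) k) hS 2
    _ = (2 * (1 - p)) ^ (N * 2) / θ ^ ((N + 1) / 2 * 2) := by
        rw [div_pow, ← pow_mul, ← pow_mul, hpθ, two_mul (1 - p)]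
    _ ≤ (2 * (1 - p)) ^ (N * 2) / θ ^ N := by
        gcongr
        omega
    _ = (4 * p * (1 - p)) ^ N := by
        rw [pow_mul', ← div_pow]
        congr 1
        rw [div_eq_iff hθ0.ne']
        linear_combination (-4 * (1 - p)) * hpθ

lemma binomial_upper_tail_le_exp {x : ℝ} (hp0 : 0 < p) (hp : p ≤ 1 / 2)
    (hx : 2 * p * exp (1 - 2 * p) ≤ 1 - x) :
    ∑ k ∈ (range (N + 1)).filter (N < 2 * ·), binomialWeight N p k ≤ exp (-(x * N / 2)) := by
  have h4 : 4 * p * (1 - p) ≤ exp (-x) := by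
    have : 2 * (1 - p) ≤ exp (1 - 2 * p) := by linarith [add_one_le_exp (1 - 2 * p)]
    nlinarith [one_sub_le_exp_neg x]
  refine (pow_le_pow_iff_left₀ (sum_nonneg fun k _ => binomialWeight_nonneg hp0.le (by linarith) k)
    (exp_pos _).le two_ne_zero).mp ?_
  calc _ ≤ (4 * p * (1 - p)) ^ N := sq_binomial_upper_tail_le hp0 hp
    _ ≤ exp (-x) ^ N := pow_le_pow_left₀ (by nlinarith) h4 N
    _ = exp (-(x * N / 2)) ^ 2 := by rw [← exp_nat_mul, ← exp_nat_mul]; ring_nf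

end BinomialTails

section NonSeymourVertices
variable {n : ℕ} {p : ℝ}

lemma setOf_dN1_eq_and_no_arcs (v : Fin n) (A T : Finset (Fin n)) :
    {ω | dN1 ω v = ↑A ∧ ∀ x ∈ A, ∀ w ∈ T, ¬ dadj ω x w} =
      arcEvent ({v} ×ˢ A) ({v} ×ˢ (insert v A)ᶜ ∪ A ×ˢ T) := by
  ext ω
  simp only [arcEvent, Set.mem_ofPred_eq, mem_union, mem_product, mem_singleton, mem_compl,
    mem_insert, not_or, Set.ext_iff, dN1, mem_coe, Prod.forall, or_imp, forall_and, and_imp]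
  constructor
  · rintro ⟨hN1, hT⟩
    refine ⟨?_, ?_, fun x w hx hw => hT x hx w hw⟩
    · rintro _ w rfl hw
      exact (hN1 w).mpr hw
    · rintro _ w rfl - hwA hvw
      exact hwA ((hN1 w).mp hvw)
  · rintro ⟨hA, hAc, hT⟩
    refine ⟨fun w => ⟨fun hvw => ?_, hA v w rfl⟩, fun x hx w hw => hT x w hx hw⟩
    by_contra hwA
    exact hAc v w rfl (fun h => hvw.1 h.symm) hwA hvw

lemma dPr_dN1_eq_and_no_arcs {v : Fin n} {A T : Finset (Fin n)} (hvA : v ∉ A)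
    (hAT : Disjoint A T) :
    dPr p {ω | dN1 ω v = ↑A ∧ ∀ x ∈ A, ∀ w ∈ T, ¬ dadj ω x w} =
      p ^ #A * (1 - p) ^ (n - 1 - #A + #A * #T) := by
  rw [setOf_dN1_eq_and_no_arcs, dPr_arcEvent]
  · have hdisj : Disjoint ({v} ×ˢ (insert v A)ᶜ) (A ×ˢ T) :=
      disjoint_product.mpr (Or.inl (disjoint_singleton_left.mpr hvA))
    rw [card_union_of_disjoint hdisj]
    simp only [card_product, card_singleton, one_mul, card_compl, card_insert_of_notMem hvA,
      Fintype.card_fin]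
    congr 2
    omega
  · exact disjoint_union_right.mpr
      ⟨disjoint_product.mpr (Or.inr (subset_insert v A).disjoint_compl_right),
        disjoint_product.mpr (Or.inl (disjoint_singleton_left.mpr hvA))⟩
  · simp only [mem_product, mem_singleton, Prod.forall]
    rintro _ w ⟨rfl, hw⟩ rfl
    exact hvA hw
  · simp only [mem_union, mem_product, mem_singleton, mem_compl, mem_insert, Prod.forall]
    rintro u w (⟨rfl, hw⟩ | ⟨hu, hw⟩) rfl
    · exact hw (Or.inl rfl)
    · exact disjoint_left.mp hAT hu hw

lemma exists_no_arcs_of_not_dSeymour {ω : DOmega n} {v : Fin n} {A : Finset (Fin n)}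
    (hA : dN1 ω v = ↑A) (hS : ¬ dSeymour ω v) :
    ∃ T ∈ powersetCard (n - 2 * #A) (insert v A)ᶜ, ∀ x ∈ A, ∀ w ∈ T, ¬ dadj ω x w := by
  classical
  set F := (insert v A)ᶜ.filter fun w => ∀ x ∈ A, ¬ dadj ω x w
  have hN1 (w : Fin n) : dadj ω v w ↔ w ∈ A := by rw [← mem_coe, ← hA]; rfl
  have hvA : v ∉ A := fun h => ((hN1 v).mpr h).1 rfl
  have hcover : ↑(insert v A)ᶜ ⊆ dN2 ω v ∪ ↑F := by
    intro w hw
    simp only [coe_compl, coe_insert, Set.mem_compl_iff, Set.mem_insert_iff, not_or,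
      mem_coe] at hw
    by_cases h : ∃ x ∈ A, dadj ω x w
    · obtain ⟨x, hxA, hxw⟩ := h
      exact Or.inl ⟨hw.1, fun hvw => hw.2 ((hN1 w).mp hvw), x, (hN1 x).mpr hxA, hxw⟩
    · push Not at h
      exact Or.inr (mem_filter.mpr ⟨by simp [hw.1, hw.2], h⟩)
  have hcard : n - 1 - #A ≤ (dN2 ω v).ncard + #F := by
    calc n - 1 - #A = #(insert v A)ᶜ := by
          rw [card_compl, card_insert_of_notMem hvA, Fintype.card_fin]; omega
      _ ≤ (dN2 ω v ∪ ↑F).ncard := by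
          rw [← Set.ncard_coe_finset]; exact Set.ncard_le_ncard hcover
      _ ≤ _ := by rw [← Set.ncard_coe_finset F]; exact Set.ncard_union_le _ _
  have hlt : (dN2 ω v).ncard < #A := by
    simpa [dSeymour, hA] using hS
  obtain ⟨T, hTF, hT⟩ := exists_subset_card_eq (s := F) (n := n - 2 * #A) (by omega)
  refine ⟨T, mem_powersetCard.mpr ⟨hTF.trans (filter_subset _ _), hT⟩, fun x hx w hw => ?_⟩
  exact (mem_filter.mp (hTF hw)).2 x hx

lemma dPr_not_dSeymour_and_dN1_eq_le (hp0 : 0 ≤ p) (hp1 : p ≤ 1) {v : Fin n}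
    {A : Finset (Fin n)} (hvA : v ∉ A) :
    dPr p {ω | ¬ dSeymour ω v ∧ dN1 ω v = ↑A} ≤
      p ^ #A * (1 - p) ^ (n - 1 - #A) *
        min 1 ((n - 1 - #A).choose (n - 2 * #A) * (1 - p) ^ (#A * (n - 2 * #A))) := by
  classical
  have hq : 0 ≤ 1 - p := by linarith
  rw [mul_min_of_nonneg _ _ (by positivity), mul_one]
  refine le_min ?_ ?_
  · calc _ ≤ dPr p {ω | dN1 ω v = ↑A ∧ ∀ x ∈ A, ∀ w ∈ (∅ : Finset (Fin n)), ¬ dadj ω x w} :=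
          dPr_mono hp0 hp1 fun ω hω => ⟨hω.2, by simp⟩
      _ = _ := by
          rw [dPr_dN1_eq_and_no_arcs hvA (disjoint_empty_right A)]
          simp
  · set R : Finset (Fin n) := (insert v A)ᶜ
    calc _ ≤ dPr p (⋃ T ∈ powersetCard (n - 2 * #A) R,
              {ω | dN1 ω v = ↑A ∧ ∀ x ∈ A, ∀ w ∈ T, ¬ dadj ω x w}) := by
          refine dPr_mono hp0 hp1 fun ω ⟨hS, hA⟩ => ?_
          obtain ⟨T, hT, hno⟩ := exists_no_arcs_of_not_dSeymour hA hS
          exact Set.mem_biUnion hT ⟨hA, hno⟩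
      _ ≤ ∑ T ∈ powersetCard (n - 2 * #A) R,
            dPr p {ω | dN1 ω v = ↑A ∧ ∀ x ∈ A, ∀ w ∈ T, ¬ dadj ω x w} :=
          dPr_biUnion_le hp0 hp1 _ _
      _ = _ := by
          have hR : #R = n - 1 - #A := by
            rw [card_compl, card_insert_of_notMem hvA, Fintype.card_fin]; omega
          have hterm (T) (hT : T ∈ powersetCard (n - 2 * #A) R) :
              dPr p {ω | dN1 ω v = ↑A ∧ ∀ x ∈ A, ∀ w ∈ T, ¬ dadj ω x w} =
                p ^ #A * (1 - p) ^ (n - 1 - #A) * (1 - p) ^ (#A * (n - 2 * #A)) := by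
            obtain ⟨hTR, hT⟩ := mem_powersetCard.mp hT
            have hAT : Disjoint A T :=
              disjoint_of_subset_right hTR (subset_insert v A).disjoint_compl_right
            rw [dPr_dN1_eq_and_no_arcs hvA hAT, hT, pow_add, mul_assoc]
          rw [sum_congr rfl hterm, sum_const, card_powersetCard, hR, nsmul_eq_mul]
          ring

lemma dPr_not_dSeymour_le (hp0 : 0 ≤ p) (hp1 : p ≤ 1) (v : Fin n) :
    dPr p {ω | ¬ dSeymour ω v} ≤ ∑ k ∈ range n, binomialWeight (n - 1) p k *
      min 1 ((n - 1 - k).choose (n - 2 * k) * (1 - p) ^ (k * (n - 2 * k))) := by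
  classical
  calc dPr p {ω | ¬ dSeymour ω v}
      ≤ dPr p (⋃ A ∈ (univ.erase v).powerset, {ω | ¬ dSeymour ω v ∧ dN1 ω v = ↑A}) := by
        refine dPr_mono hp0 hp1 fun ω hω => Set.mem_biUnion (x := univ.filter (dadj ω v))
          (mem_powerset.mpr fun w hw => ?_) ⟨hω, by ext; simp [dN1]⟩
        exact mem_erase.mpr ⟨fun h => (mem_filter.mp hw).2.1 h.symm, mem_univ w⟩
    _ ≤ ∑ A ∈ (univ.erase v).powerset, dPr p {ω | ¬ dSeymour ω v ∧ dN1 ω v = ↑A} :=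
        dPr_biUnion_le hp0 hp1 _ _
    _ ≤ ∑ A ∈ (univ.erase v).powerset, p ^ #A * (1 - p) ^ (n - 1 - #A) *
          min 1 ((n - 1 - #A).choose (n - 2 * #A) * (1 - p) ^ (#A * (n - 2 * #A))) :=
        sum_le_sum fun A hA => dPr_not_dSeymour_and_dN1_eq_le hp0 hp1
          fun hvA => by simpa using mem_powerset.mp hA hvA
    _ = _ := by
        rw [sum_powerset_apply_card (fun k => p ^ k * (1 - p) ^ (n - 1 - k) *
            min 1 ((n - 1 - k).choose (n - 2 * k) * (1 - p) ^ (k * (n - 2 * k)))),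
          card_erase_of_mem (mem_univ v), card_univ, Fintype.card_fin,
          Nat.sub_add_cancel v.pos]
        simp only [binomialWeight, nsmul_eq_mul]
        exact sum_congr rfl fun k _ => by ring

lemma choose_mul_one_sub_pow_le (hp0 : 0 ≤ p) (hp1 : p ≤ 1) {m a k t : ℕ} (hm : m ≤ n)
    (hk : a + 1 ≤ k) (ht : 1 ≤ t) (hρ : n * exp (-(p * (a + 1))) ≤ 1) :
    (m.choose t : ℝ) * (1 - p) ^ (k * t) ≤ n * exp (-(p * (a + 1))) := by
  have hq : 0 ≤ 1 - p := by linarith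
  have hchoose : (m.choose t : ℝ) ≤ (n : ℝ) ^ t := by
    exact_mod_cast (Nat.choose_le_pow m t).trans (Nat.pow_le_pow_left hm t)
  have hpow : (1 - p) ^ (k * t) ≤ exp (-(p * (a + 1))) ^ t :=
    calc (1 - p) ^ (k * t) ≤ ((1 - p) ^ (a + 1)) ^ t := by
          rw [← pow_mul]; exact pow_le_pow_of_le_one hq (by linarith) (by gcongr)
      _ ≤ (exp (-p) ^ (a + 1)) ^ t := by
          gcongr; linarith [one_sub_le_exp_neg p]
      _ = exp (-(p * (a + 1))) ^ t := by
          rw [← exp_nat_mul]; push_cast; ring_nf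
  calc (m.choose t : ℝ) * (1 - p) ^ (k * t) ≤ (n * exp (-(p * (a + 1)))) ^ t := by
        rw [mul_pow]; gcongr
    _ ≤ n * exp (-(p * (a + 1))) := pow_le_of_le_one (by positivity) hρ (by omega)

lemma sum_binomialWeight_mul_min_le (hp0 : 0 ≤ p) (hp1 : p ≤ 1) (hn : 1 ≤ n) (a : ℕ)
    (hρ : n * exp (-(p * (a + 1))) ≤ 1) :
    ∑ k ∈ range n, binomialWeight (n - 1) p k *
        min 1 ((n - 1 - k).choose (n - 2 * k) * (1 - p) ^ (k * (n - 2 * k))) ≤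
      ∑ k ∈ (range n).filter (· ≤ a), binomialWeight (n - 1) p k + n * exp (-(p * (a + 1))) +
        ∑ k ∈ (range n).filter (n - 1 < 2 * ·), binomialWeight (n - 1) p k := by
  obtain ⟨N, rfl⟩ : ∃ N, n = N + 1 := ⟨n - 1, by omega⟩
  simp only [Nat.add_sub_cancel, sum_filter]
  set ρ := ((N + 1 : ℕ) : ℝ) * exp (-(p * (a + 1)))
  have hterm (k : ℕ) : binomialWeight N p k *
      min 1 ((N - k).choose (N + 1 - 2 * k) * (1 - p) ^ (k * (N + 1 - 2 * k))) ≤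
      (if k ≤ a then binomialWeight N p k else 0) + ρ * binomialWeight N p k +
        (if N < 2 * k then binomialWeight N p k else 0) := by
    have hw := binomialWeight_nonneg (N := N) hp0 hp1 k
    have hρw : 0 ≤ ρ * binomialWeight N p k := mul_nonneg (by positivity) hw
    set c : ℝ := (N - k).choose (N + 1 - 2 * k) * (1 - p) ^ (k * (N + 1 - 2 * k))
    have hmin : binomialWeight N p k * min 1 c ≤ binomialWeight N p k :=
      mul_le_of_le_one_right hw (min_le_left _ _)
    by_cases hka : k ≤ a
    · split_ifs <;> linarith
    by_cases hkN : N < 2 * k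
    · rw [if_neg hka, if_pos hkN]; linarith
    rw [if_neg hka, if_neg hkN, zero_add, add_zero, mul_comm ρ]
    refine mul_le_mul_of_nonneg_left ((min_le_right _ _).trans ?_) hw
    exact choose_mul_one_sub_pow_le hp0 hp1 (by omega) (by omega) (by omega) hρ
  calc _ ≤ _ := sum_le_sum fun k _ => hterm k
    _ = _ := by rw [sum_add_distrib, sum_add_distrib, ← mul_sum, sum_binomialWeight, mul_one]

lemma n_sub_dES_le (hp0 : 0 ≤ p) (hp1 : p ≤ 1) (hn : 1 ≤ n) (a : ℕ)
    (hρ : n * exp (-(p * (a + 1))) ≤ 1) :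
    n - dES n p ≤ n * (∑ k ∈ (range n).filter (· ≤ a), binomialWeight (n - 1) p k +
      n * exp (-(p * (a + 1))) +
        ∑ k ∈ (range n).filter (n - 1 < 2 * ·), binomialWeight (n - 1) p k) := by
  rw [n_sub_dES_eq_sum_dPr]
  refine (sum_le_sum fun v _ => (dPr_not_dSeymour_le hp0 hp1 v).trans
    (sum_binomialWeight_mul_min_le hp0 hp1 hn a hρ)).trans_eq ?_
  rw [sum_const, card_univ, Fintype.card_fin, nsmul_eq_mul]

end NonSeymourVertices

lemma natCast_mul_exp_neg_le {n : ℕ} (hn : 0 < n) {κ x : ℝ} (h : (1 + κ) * log n ≤ x) :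
    n * exp (-x) ≤ exp (-(κ * log n)) := by
  rw [← exp_log (Nat.cast_pos.mpr hn : (0 : ℝ) < n), ← exp_add, log_exp]
  gcongr
  linarith

lemma eventually_log_le_mul {C : ℝ} (hC : 0 < C) : ∀ᶠ n : ℕ in atTop, log n ≤ C * n := by
  filter_upwards [isLittleO_log_id_atTop.natCast_atTop.bound hC] with n h
  simpa [abs_of_nonneg (log_natCast_nonneg n)] using h

lemma tendsto_exp_neg_mul_log {κ : ℝ} (hκ : 0 < κ) :
    Tendsto (fun n : ℕ => exp (-(κ * log n))) atTop (nhds 0) :=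
  tendsto_exp_atBot.comp <| tendsto_neg_atTop_atBot.comp <|
    (tendsto_log_atTop.const_mul_atTop hκ).comp tendsto_natCast_atTop_atTop

lemma natCast_mul_lower_tail_le {n a : ℕ} {P δ : ℝ} (hn : 2 ≤ n) (hP0 : 0 ≤ P) (hP1 : P ≤ 1)
    (hδ0 : 0 < δ) (hδ1 : δ < 1) (ha : (a : ℝ) ≤ (1 - δ) * (n - 1) * P)
    (hnc : log n ≤ chernoffRate δ ^ 2 / 16 * n) (hPn : log n ≤ n * P ^ 2) :
    n * ∑ k ∈ (range n).filter (· ≤ a), binomialWeight (n - 1) P k ≤ exp (-(1 * log n)) := by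
  have hnr : (2 : ℝ) ≤ n := by exact_mod_cast hn
  have hc := chernoffRate_pos hδ0 hδ1
  have hN : ((n - 1 : ℕ) : ℝ) = n - 1 := by rw [Nat.cast_sub (by omega)]; simp
  have h := binomial_lower_tail_le (N := n - 1) (a := a) hP0 hP1 hδ0 hδ1 (by rwa [hN])
  rw [Nat.sub_add_cancel (by omega), hN] at h
  refine (mul_le_mul_of_nonneg_left h (by positivity)).trans (natCast_mul_exp_neg_le (by omega) ?_)
  refine (pow_le_pow_iff_left₀ (by positivity)
    (mul_nonneg (mul_nonneg hc.le (by linarith)) hP0) two_ne_zero).mp ?_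
  have h16 : 16 * log n ≤ chernoffRate δ ^ 2 * n := by linarith
  calc ((1 + 1) * log n) ^ 2 = (16 * log n) * log n / 4 := by ring
    _ ≤ (chernoffRate δ ^ 2 * n) * (n * P ^ 2) / 4 := by
        gcongr (?_ * ?_) / 4
    _ = (chernoffRate δ * (n / 2) * P) ^ 2 := by ring
    _ ≤ (chernoffRate δ * (n - 1) * P) ^ 2 := by gcongr; linarith

lemma natCast_mul_upper_tail_le {n : ℕ} {P η : ℝ} (hn : 1 ≤ n) (hP0 : 0 < P) (hP : P ≤ 1 / 2)
    (hnη : 4 + 2 * η ≤ η * n) (hPη : 2 * P * exp (1 - 2 * P) ≤ 1 - (2 + η) * log n / n) :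
    n * ∑ k ∈ (range n).filter (n - 1 < 2 * ·), binomialWeight (n - 1) P k ≤
      exp (-(η / 4 * log n)) := by
  have hN : ((n - 1 : ℕ) : ℝ) = n - 1 := by rw [Nat.cast_sub hn]; simp
  have h := binomial_upper_tail_le_exp (N := n - 1) hP0 hP hPη
  rw [Nat.sub_add_cancel hn, hN] at h
  refine (mul_le_mul_of_nonneg_left h (by positivity)).trans (natCast_mul_exp_neg_le (by omega) ?_)
  rw [div_mul_eq_mul_div, div_div, le_div_iff₀ (by positivity)]
  nlinarith [log_natCast_nonneg n]

lemma n_sub_dES_le_of_large {n : ℕ} {ε η P : ℝ} (hε : 0 < ε) (hn : 2 ≤ n)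
    (hnε : 8 + 2 * ε ≤ ε * n) (hnη : 4 + 2 * η ≤ η * n)
    (hnc : log n ≤ chernoffRate (ε / (4 + 2 * ε)) ^ 2 / 16 * n)
    (hP : √((2 + ε) * log n / n) ≤ P) (hP2 : P < 1 / 2)
    (hPη : 2 * P * exp (1 - 2 * P) ≤ 1 - (2 + η) * log n / n) :
    n - dES n P ≤ exp (-(1 * log n)) + exp (-(ε / 4 * log n)) + exp (-(η / 4 * log n)) := by
  set L := log n
  set δ := ε / (4 + 2 * ε) with hδ
  have hnr : (2 : ℝ) ≤ n := by exact_mod_cast hn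
  have hL : 0 < L := log_pos (by linarith)
  have hδ0 : 0 < δ := by positivity
  have hδ1 : δ < 1 := (div_lt_one (by positivity)).mpr (by linarith)
  have hP0 : 0 < P := (sqrt_pos.mpr (by positivity)).trans_le hP
  have hPsq : (2 + ε) * L ≤ n * P ^ 2 := by
    rw [sqrt_le_left hP0.le, div_le_iff₀ (by linarith)] at hP; linarith
  set a := ⌊(1 - δ) * (n - 1) * P⌋₊
  have ha : (a : ℝ) ≤ (1 - δ) * (n - 1) * P :=
    Nat.floor_le (mul_nonneg (mul_nonneg (by linarith) (by linarith)) hP0.le)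
  have hmid : (1 + (1 + ε / 4)) * L ≤ P * (a + 1) := by
    have hδε : (1 - δ) * (2 + ε) = 2 + ε / 2 := by rw [hδ]; field_simp; ring
    refine le_of_mul_le_mul_left ?_ (by linarith : (0 : ℝ) < n)
    calc n * ((1 + (1 + ε / 4)) * L) ≤ (2 + ε / 2) * (n - 1) * L := by nlinarith
      _ = (1 - δ) * (n - 1) * ((2 + ε) * L) := by rw [← hδε]; ring
      _ ≤ (1 - δ) * (n - 1) * (n * P ^ 2) := by
          gcongr; exact mul_nonneg (by linarith) (by linarith)
      _ = n * P * ((1 - δ) * (n - 1) * P) := by ring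
      _ ≤ n * P * (a + 1) := by gcongr; exact (Nat.lt_floor_add_one _).le
      _ = n * (P * (a + 1)) := by ring
  have hρ : n * exp (-(P * (a + 1))) ≤ exp (-((1 + ε / 4) * L)) :=
    natCast_mul_exp_neg_le (by omega) hmid
  refine (n_sub_dES_le hP0.le (by linarith) (by omega) a
    (hρ.trans (exp_le_one_iff.mpr (by nlinarith)))).trans ?_
  rw [mul_add, mul_add]
  refine add_le_add (add_le_add ?_ ?_) (natCast_mul_upper_tail_le (by omega) hP0 hP2.le hnη hPη)
  · exact natCast_mul_lower_tail_le hn hP0.le (by linarith) hδ0 hδ1 ha hnc (by nlinarith)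
  · exact (mul_le_mul_of_nonneg_left hρ (by positivity)).trans
      (natCast_mul_exp_neg_le (by omega) le_rfl)

/-- Fix `ε > 0` and `η > 0`, and let `(p_n)` be a sequence with
`√((2+ε)·log n / n) ≤ p_n < 1/2` and `2·p_n·e^{1−2p_n} ≤ 1 − (2+η)·log n / n` for all
large `n`.  Then the expected number of Seymour vertices of `D(n, p_n)` satisfies
`E(S_n) = n − o(1)`, i.e. `n − E(S_n) → 0` as `n → ∞`. -/
theorem digraph_expected_seymour_n_sub_little_o (ε η : ℝ) (hε : 0 < ε) (hη : 0 < η)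
    (p : ℕ → ℝ)
    (hp : ∀ᶠ n : ℕ in Filter.atTop,
      Real.sqrt ((2 + ε) * Real.log n / n) ≤ p n ∧ p n < 1 / 2 ∧
        2 * p n * Real.exp (1 - 2 * p n) ≤ 1 - (2 + η) * Real.log n / n) :
    Filter.Tendsto (fun n : ℕ => (n : ℝ) - dES n (p n)) Filter.atTop (nhds 0) := by
  have hc : 0 < chernoffRate (ε / (4 + 2 * ε)) :=
    chernoffRate_pos (by positivity) ((div_lt_one (by positivity)).mpr (by linarith))
  have hbound : ∀ᶠ n : ℕ in atTop, 0 ≤ (n : ℝ) - dES n (p n) ∧ (n : ℝ) - dES n (p n) ≤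
      exp (-(1 * log n)) + exp (-(ε / 4 * log n)) + exp (-(η / 4 * log n)) := by
    filter_upwards [hp, eventually_ge_atTop 2,
      (tendsto_natCast_atTop_atTop.const_mul_atTop hε).eventually_ge_atTop (8 + 2 * ε),
      (tendsto_natCast_atTop_atTop.const_mul_atTop hη).eventually_ge_atTop (4 + 2 * η),
      eventually_log_le_mul (by positivity : 0 < chernoffRate (ε / (4 + 2 * ε)) ^ 2 / 16)]
      with n ⟨hP, hP2, hPη⟩ hn hnε hnη hnc
    have hP0 : 0 ≤ p n := (sqrt_nonneg _).trans hP
    exact ⟨n_sub_dES_nonneg hP0 (by linarith),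
      n_sub_dES_le_of_large hε hn hnε hnη hnc hP hP2 hPη⟩
  have hlim : Tendsto (fun n : ℕ => exp (-(1 * log n)) + exp (-(ε / 4 * log n)) +
      exp (-(η / 4 * log n))) atTop (nhds 0) := by
    simpa using ((tendsto_exp_neg_mul_log one_pos).add (tendsto_exp_neg_mul_log
      (by positivity : 0 < ε / 4))).add (tendsto_exp_neg_mul_log (by positivity : 0 < η / 4))
  exact tendsto_of_tendsto_of_tendsto_of_le_of_le' tendsto_const_nhds hlim
    (hbound.mono fun _ h => h.1) (hbound.mono fun _ h => h.2)
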